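/- arXiv:1606.01485 — 2 statements merged into one kernel-verified Lean document; each statement's English description precedes it below -/
import Mathlib

section
/- Let ξ be an integrable random variable on a probability space (Ω, F, P), let G₁, G₂ ⊆ F be sub-σ-fields, and let A ∈ G₁ ∩ G₂ be an event such that A ∩ G₁ ⊆ A ∩ G₂ (i.e., for every B ∈ G₁ there exists B' ∈ G₂ with A ∩ B = A ∩ B'). Then E[ξ | G₁] = E[E[ξ | G₂] | G₁] almost surely on A. -/
/-!
On `A`, conditioning on `m₁` only sees the traces `A ∩ s` of `m₁`-sets, and by hypothesis these
are `m₂`-measurable. So `𝟙_A ξ` and `𝟙_A E[ξ|m₂]` have the same integral over every `m₁`-set,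
hence the same `m₁`-conditional expectation, and `E[𝟙_A · | m₁] = 𝟙_A E[· | m₁]` because `A` is
`m₁`-measurable.
-/

open MeasureTheory

namespace MeasureTheory

variable {Ω : Type*} {m m₁ m₂ m₀ : MeasurableSpace Ω} {μ : Measure Ω} {f g : Ω → ℝ} {A s : Set Ω}

theorem setIntegral_indicator_condExp (hm₂ : m₂ ≤ m₀) [SigmaFinite (μ.trim hm₂)]
    (hf : Integrable f μ) (hA : MeasurableSet[m₀] A) (hAs : MeasurableSet[m₂] (A ∩ s)) :
    ∫ x in s, A.indicator (μ[f|m₂]) x ∂μ = ∫ x in s, A.indicator f x ∂μ := by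
  rw [setIntegral_indicator hA, setIntegral_indicator hA, Set.inter_comm,
    setIntegral_condExp hm₂ hf hAs]

theorem condExp_indicator_condExp_ae_eq (hm₁ : m₁ ≤ m₀) (hm₂ : m₂ ≤ m₀)
    [SigmaFinite (μ.trim hm₁)] [SigmaFinite (μ.trim hm₂)] (hf : Integrable f μ)
    (hA : MeasurableSet[m₀] A) (htrace : ∀ s, MeasurableSet[m₁] s → MeasurableSet[m₂] (A ∩ s)) :
    μ[A.indicator (μ[f|m₂])|m₁] =ᵐ[μ] μ[A.indicator f|m₁] :=
  ae_eq_condExp_of_forall_setIntegral_eq hm₁ (hf.indicator hA)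
    (fun _ _ _ => integrable_condExp.integrableOn)
    (fun s hs _ => by
      rw [setIntegral_condExp hm₁ (integrable_condExp.indicator hA) hs]
      exact setIntegral_indicator_condExp hm₂ hf hA (htrace s hs))
    stronglyMeasurable_condExp.aestronglyMeasurable

theorem condExp_ae_eq_restrict_of_condExp_indicator_ae_eq (hm : m ≤ m₀)
    (hf : Integrable f μ) (hg : Integrable g μ) (hA : MeasurableSet[m] A)
    (hfg : μ[A.indicator f|m] =ᵐ[μ] μ[A.indicator g|m]) :
    μ[f|m] =ᵐ[μ.restrict A] μ[g|m] := by
  have hA₀ : MeasurableSet[m₀] A := hm A hA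
  calc μ[f|m] =ᵐ[μ.restrict A] A.indicator (μ[f|m]) := (indicator_ae_eq_restrict hA₀).symm
    _ =ᵐ[μ.restrict A] μ[A.indicator f|m] := ae_restrict_of_ae (condExp_indicator hf hA).symm
    _ =ᵐ[μ.restrict A] μ[A.indicator g|m] := ae_restrict_of_ae hfg
    _ =ᵐ[μ.restrict A] A.indicator (μ[g|m]) := ae_restrict_of_ae (condExp_indicator hg hA)
    _ =ᵐ[μ.restrict A] μ[g|m] := indicator_ae_eq_restrict hA₀

end MeasureTheory

/-- Generalized tower property: if `A ∩ G₁ ⊆ A ∩ G₂` (every `G₁`-set agrees with some `G₂`-set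
on `A`) for an event `A ∈ G₁ ∩ G₂`, then `E[ξ|G₁] = E[E[ξ|G₂]|G₁]` a.s. on `A`. -/
theorem stmt0 {Ω : Type*} {m0 : MeasurableSpace Ω} (P : Measure Ω) [IsProbabilityMeasure P]
    {m1 m2 : MeasurableSpace Ω} (hm1 : m1 ≤ m0) (hm2 : m2 ≤ m0)
    (ξ : Ω → ℝ) (hξ : Integrable ξ P)
    (A : Set Ω) (hA1 : MeasurableSet[m1] A) (hA2 : MeasurableSet[m2] A)
    (h : ∀ B : Set Ω, MeasurableSet[m1] B → ∃ B' : Set Ω, MeasurableSet[m2] B' ∧ A ∩ B = A ∩ B') :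
    ∀ᵐ ω ∂(P.restrict A), (P[ξ|m1]) ω = (P[(P[ξ|m2])|m1]) ω := by
  have htrace : ∀ s, MeasurableSet[m1] s → MeasurableSet[m2] (A ∩ s) := fun s hs => by
    obtain ⟨s', hs', hss'⟩ := h s hs
    exact hss' ▸ hA2.inter hs'
  exact condExp_ae_eq_restrict_of_condExp_indicator_ae_eq hm1 hξ integrable_condExp hA1
    (condExp_indicator_condExp_ae_eq hm1 hm2 hξ (hm1 A hA1) htrace).symm
end

section
/- Let {x(u,t)} be a Brownian stochastic flow, μ a Borel probability measure supported in [0,1], λ := μ ∘ x⁻¹(·,1) the random image measure, and λⁿ the analogous image of the discretized measure μⁿ = Σ_k μ(I_k^n) δ_{(2k−1)/(2n)}. Then E[W₁(λ, λⁿ)] ≤ K/√n with K = √(64/(3√(2π)) + 1/4). Consequently the Wasserstein distance between the laws Λ and Λⁿ of λ and λⁿ in (M₁(ℝ), W₁) satisfies W₁(Λ, Λⁿ) ≤ K/√n. -/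
/-!
Since the flow is monotone, the coupling of `λ` and `λⁿ` that sends the image of each point of
the cell `I_k^n` to the image of the cell's centre costs at most the increment
`x(k/n, 1) - x((k-1)/n, 1)` of the flow across the cell. The one-point motions are martingales
started at their initial points, so every increment has mean exactly `1/n`; hence
`E[W₁(λ, λⁿ)] ≤ 1/n ≤ K/√n`, as `K ≥ 1`. Coupling `Λ` and `Λⁿ` through the random pair
`(λ, λⁿ)` bounds `W₁(Λ, Λⁿ)` by the same expectation.
-/

open MeasureTheory ProbabilityTheory Real NNReal

noncomputable section

/-- A Brownian stochastic flow: each one-point motion is a Brownian motion started at `u`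
with respect to the common filtration `ℱ` (encoded, via Lévy's characterization, by `x u`
and `(x u)² - t` being continuous `ℱ`-martingales), and the flow is monotone. -/
structure IsBrownianFlow {Ω : Type*} {m0 : MeasurableSpace Ω} (P : Measure Ω)
    (ℱ : Filtration ℝ≥0 m0) (x : ℝ → ℝ≥0 → Ω → ℝ) : Prop where
  init : ∀ u : ℝ, ∀ᵐ ω ∂P, x u 0 ω = u
  cont : ∀ u : ℝ, ∀ᵐ ω ∂P, Continuous fun t => x u t ω
  mart : ∀ u : ℝ, Martingale (x u) ℱ P
  sq : ∀ u : ℝ, Martingale (fun (t : ℝ≥0) ω => (x u t ω) ^ 2 - (t : ℝ)) ℱ P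
  mono : ∀ᵐ ω ∂P, ∀ u v : ℝ, u ≤ v → ∀ t : ℝ≥0, x u t ω ≤ x v t ω

/-- Minimal coupling cost for a cost function `c`. -/
def Wcost {Y : Type*} [MeasurableSpace Y] (c : Y → Y → ℝ) (μ ν : Measure Y) : ℝ :=
  sInf {r : ℝ | ∃ κ : Measure (Y × Y), IsProbabilityMeasure κ ∧
    κ.map Prod.fst = μ ∧ κ.map Prod.snd = ν ∧ r = ∫ p, c p.1 p.2 ∂κ}

/-- The Wasserstein-1 distance on (probability) measures on `ℝ`. -/
def W1 (μ ν : Measure ℝ) : ℝ := Wcost (fun u v => |u - v|) μ ν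

/-- The interval `I_k^n`. -/
def Ikn (n k : ℕ) : Set ℝ :=
  if k = n then Set.Icc (((n:ℝ) - 1) / n) 1
  else Set.Ico (((k:ℝ) - 1) / n) ((k:ℝ) / n)

def cellIndex (n : ℕ) (u : ℝ) : ℕ := min n (⌊u * n⌋₊ + 1)

lemma measurable_cellIndex (n : ℕ) : Measurable (cellIndex n) :=
  measurable_const.min ((Nat.measurable_floor.comp (measurable_id.mul_const _)).add
    measurable_const)

lemma cellIndex_mem_Icc {n : ℕ} (hn : 1 ≤ n) (u : ℝ) : cellIndex n u ∈ Finset.Icc 1 n :=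
  Finset.mem_Icc.mpr ⟨le_min hn (Nat.le_add_left 1 _), min_le_left _ _⟩

lemma cellCenter_mem_Icc (n k : ℕ) :
    (2 * (k:ℝ) - 1) / (2 * n) ∈ Set.Icc (((k:ℝ) - 1) / n) ((k:ℝ) / n) := by
  rcases n.eq_zero_or_pos with rfl | hpos
  · simp
  have hn : (0:ℝ) < n := by exact_mod_cast hpos
  constructor <;> rw [div_le_div_iff₀ (by positivity) (by positivity)] <;> nlinarith

lemma Ikn_subset_Icc {n k : ℕ} (hk : 1 ≤ k) (hkn : k ≤ n) :
    Ikn n k ⊆ Set.Icc (((k:ℝ) - 1) / n) ((k:ℝ) / n) := by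
  have hn : (n:ℝ) ≠ 0 := Nat.cast_ne_zero.mpr (by omega)
  unfold Ikn
  split_ifs with h
  · subst k; rw [div_self hn]
  · exact Set.Ico_subset_Icc_self

lemma Ikn_subset_unitInterval {n k : ℕ} (hk : 1 ≤ k) (hkn : k ≤ n) :
    Ikn n k ⊆ Set.Icc 0 1 := by
  have hk' : (1:ℝ) ≤ k := by exact_mod_cast hk
  have hkn' : (k:ℝ) ≤ n := by exact_mod_cast hkn
  refine (Ikn_subset_Icc hk hkn).trans (Set.Icc_subset_Icc (by positivity) ?_)
  exact div_le_one_of_le₀ hkn' (by positivity)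

lemma cellIndex_eq_iff {n k : ℕ} (hk : 1 ≤ k) (hkn : k ≤ n) {u : ℝ}
    (hu : u ∈ Set.Icc (0:ℝ) 1) : cellIndex n u = k ↔ u ∈ Ikn n k := by
  have hn : (0:ℝ) < n := by exact_mod_cast hk.trans hkn
  have hun : 0 ≤ u * n := mul_nonneg hu.1 hn.le
  unfold cellIndex Ikn
  split_ifs with h
  · subst k
    have : n - 1 ≤ ⌊u * n⌋₊ ↔ ((n - 1 : ℕ) : ℝ) ≤ u * n := Nat.le_floor_iff hun
    simp only [Set.mem_Icc, hu.2, and_true, div_le_iff₀ hn, ← Nat.cast_pred hk] at this ⊢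
    rw [← this]
    omega
  · have : ⌊u * n⌋₊ = k - 1 ↔ ((k - 1 : ℕ) : ℝ) ≤ u * n ∧ u * n < ((k - 1 : ℕ) : ℝ) + 1 :=
      Nat.floor_eq_iff hun
    simp only [Set.mem_Ico, div_le_iff₀ hn, lt_div_iff₀ hn, Nat.cast_sub hk, Nat.cast_one,
      sub_add_cancel] at this ⊢
    rw [← this]
    omega

lemma measure_preimage_cellIndex {μ : Measure ℝ} (hsupp : μ (Set.Icc (0:ℝ) 1)ᶜ = 0)
    {n k : ℕ} (hk : 1 ≤ k) (hkn : k ≤ n) : μ (cellIndex n ⁻¹' {k}) = μ (Ikn n k) := by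
  rw [← measure_inter_conull hsupp]
  congr 1
  ext u
  refine ⟨fun ⟨h, hu⟩ => (cellIndex_eq_iff hk hkn hu).1 h, fun h => ?_⟩
  have hu := Ikn_subset_unitInterval hk hkn h
  exact ⟨(cellIndex_eq_iff hk hkn hu).2 h, hu⟩

lemma map_cellIndex {μ : Measure ℝ} (hsupp : μ (Set.Icc (0:ℝ) 1)ᶜ = 0) {n : ℕ} (hn : 1 ≤ n) :
    μ.map (cellIndex n) = ∑ k ∈ Finset.Icc 1 n, μ (Ikn n k) • Measure.dirac k := by
  refine Measure.ext_iff_singleton.2 fun j => ?_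
  rw [Measure.map_apply (measurable_cellIndex n) (measurableSet_singleton j)]
  simp only [Measure.finsetSum_apply, Measure.smul_apply, Measure.dirac_apply',
    MeasurableSpace.measurableSet_top, Set.indicator_singleton, Pi.one_apply, smul_eq_mul]
  by_cases hj : j ∈ Finset.Icc 1 n
  · rw [Finset.sum_eq_single_of_mem j hj fun k _ hkj => by simp [hkj], Pi.single_eq_same,
      mul_one, measure_preimage_cellIndex hsupp (Finset.mem_Icc.1 hj).1 (Finset.mem_Icc.1 hj).2]
  · have hempty : cellIndex n ⁻¹' {j} = ∅ :=
      Set.eq_empty_of_forall_notMem fun u hu => hj (hu ▸ cellIndex_mem_Icc hn u)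
    rw [hempty, measure_empty, Finset.sum_eq_zero fun k hk => by simp [ne_of_mem_of_not_mem hk hj]]

lemma map_comp_cellIndex {μ : Measure ℝ} (hsupp : μ (Set.Icc (0:ℝ) 1)ᶜ = 0) {n : ℕ}
    (hn : 1 ≤ n) (g : ℕ → ℝ) :
    μ.map (fun u => g (cellIndex n u)) =
      ∑ k ∈ Finset.Icc 1 n, μ (Ikn n k) • Measure.dirac (g k) := by
  have hg : Measurable g := measurable_from_nat
  change μ.map (g ∘ cellIndex n) = _
  rw [← Measure.map_map hg (measurable_cellIndex n), map_cellIndex hsupp hn,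
    ← Measure.mapₗ_apply_of_measurable hg, map_sum]
  simp only [Measure.mapₗ_apply_of_measurable hg, Measure.map_smul, Measure.map_dirac]

lemma integrable_comp_cellIndex {μ : Measure ℝ} [IsFiniteMeasure μ]
    (hsupp : μ (Set.Icc (0:ℝ) 1)ᶜ = 0) {n : ℕ} (hn : 1 ≤ n) (F : ℕ → ℝ) :
    Integrable (fun u => F (cellIndex n u)) μ := by
  refine (integrable_map_measure measurable_from_nat.aestronglyMeasurable
    (measurable_cellIndex n).aemeasurable).1 ?_
  rw [map_cellIndex hsupp hn]
  exact integrable_finsetSum_measure.2 fun k _ =>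
    (integrable_dirac enorm_lt_top).smul_measure (measure_ne_top _ _)

lemma integral_comp_cellIndex {μ : Measure ℝ} [IsFiniteMeasure μ]
    (hsupp : μ (Set.Icc (0:ℝ) 1)ᶜ = 0) {n : ℕ} (hn : 1 ≤ n) (F : ℕ → ℝ) :
    ∫ u, F (cellIndex n u) ∂μ = ∑ k ∈ Finset.Icc 1 n, μ.real (Ikn n k) * F k := by
  rw [← integral_map (measurable_cellIndex n).aemeasurable
    measurable_from_nat.aestronglyMeasurable, map_cellIndex hsupp hn,
    integral_finsetSum_measure fun k _ =>
      (integrable_dirac enorm_lt_top).smul_measure (measure_ne_top _ _)]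
  simp only [integral_smul_measure, integral_dirac, smul_eq_mul, Measure.real]

lemma Wcost_nonneg {Y : Type*} [MeasurableSpace Y] {c : Y → Y → ℝ} (hc : ∀ a b, 0 ≤ c a b)
    (μ ν : Measure Y) : 0 ≤ Wcost c μ ν :=
  Real.sInf_nonneg <| by
    rintro r ⟨κ, -, -, -, rfl⟩
    exact integral_nonneg fun p => hc p.1 p.2

lemma Wcost_map_le_integral {Ω Y : Type*} [MeasurableSpace Ω] [MeasurableSpace Y]
    {P : Measure Ω} [IsProbabilityMeasure P] {c : Y → Y → ℝ} (hc : ∀ a b, 0 ≤ c a b)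
    (X X' : Ω → Y) : Wcost c (P.map X) (P.map X') ≤ ∫ ω, c (X ω) (X' ω) ∂P := by
  have hint_nonneg : 0 ≤ ∫ ω, c (X ω) (X' ω) ∂P := integral_nonneg fun ω => hc _ _
  by_cases hXX' : AEMeasurable X P ∧ AEMeasurable X' P
  swap
  · -- one of the laws is the zero measure, which has no probabilistic coupling
    have hcouplings : {r : ℝ | ∃ κ : Measure (Y × Y), IsProbabilityMeasure κ ∧
        κ.map Prod.fst = P.map X ∧ κ.map Prod.snd = P.map X' ∧
        r = ∫ p, c p.1 p.2 ∂κ} = ∅ := by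
      refine Set.eq_empty_of_forall_notMem ?_
      rintro r ⟨κ, hκ, h1, h2, -⟩
      rw [not_and_or] at hXX'
      rcases hXX' with hX | hX'
      · have := Measure.isProbabilityMeasure_map (μ := κ) measurable_fst.aemeasurable
        exact IsProbabilityMeasure.ne_zero _ (h1.trans (Measure.map_of_not_aemeasurable hX))
      · have := Measure.isProbabilityMeasure_map (μ := κ) measurable_snd.aemeasurable
        exact IsProbabilityMeasure.ne_zero _ (h2.trans (Measure.map_of_not_aemeasurable hX'))
    rw [Wcost, hcouplings, Real.sInf_empty]
    exact hint_nonneg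
  have hpair : AEMeasurable (fun ω => (X ω, X' ω)) P := hXX'.1.prodMk hXX'.2
  have := Measure.isProbabilityMeasure_map hpair
  calc Wcost c (P.map X) (P.map X')
      ≤ ∫ p, c p.1 p.2 ∂(P.map fun ω => (X ω, X' ω)) := by
        refine csInf_le ⟨0, ?_⟩ ⟨_, this, ?_, ?_, rfl⟩
        · rintro r ⟨κ, -, -, -, rfl⟩
          exact integral_nonneg fun p => hc p.1 p.2
        · exact AEMeasurable.map_map_of_aemeasurable measurable_fst.aemeasurable hpair
        · exact AEMeasurable.map_map_of_aemeasurable measurable_snd.aemeasurable hpair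
    _ ≤ ∫ ω, c (X ω) (X' ω) ∂P := by
        by_cases hmeas : AEStronglyMeasurable (fun p : Y × Y => c p.1 p.2)
          (P.map fun ω => (X ω, X' ω))
        · rw [integral_map hpair hmeas]
        · rw [integral_undef fun h => hmeas h.1]
          exact hint_nonneg

lemma W1_nonneg (μ ν : Measure ℝ) : 0 ≤ W1 μ ν :=
  Wcost_nonneg (fun _ _ => abs_nonneg _) μ ν

/-- The coupling moves each point of the cell `I_k^n` to the cell's centre; as `φ` is monotone, the
cost on the cell is at most the increment of `φ` across it. -/
lemma W1_map_le_sum_increments {μ : Measure ℝ} [IsProbabilityMeasure μ]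
    (hsupp : μ (Set.Icc (0:ℝ) 1)ᶜ = 0) {n : ℕ} (hn : 1 ≤ n) {φ : ℝ → ℝ} (hφ : Monotone φ) :
    W1 (μ.map φ) (∑ k ∈ Finset.Icc 1 n,
        μ (Ikn n k) • Measure.dirac (φ ((2 * (k:ℝ) - 1) / (2 * n)))) ≤
      ∑ k ∈ Finset.Icc 1 n, μ.real (Ikn n k) * (φ ((k:ℝ) / n) - φ (((k:ℝ) - 1) / n)) := by
  set center : ℕ → ℝ := fun k => (2 * (k:ℝ) - 1) / (2 * n)
  set increment : ℕ → ℝ := fun k => φ ((k:ℝ) / n) - φ (((k:ℝ) - 1) / n)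
  have hcell : ∀ᵐ u ∂μ, |φ u - φ (center (cellIndex n u))| ≤ increment (cellIndex n u) := by
    filter_upwards [ae_iff.2 hsupp] with u hu
    have hk := Finset.mem_Icc.1 (cellIndex_mem_Icc hn u)
    obtain ⟨hlo, hhi⟩ := Ikn_subset_Icc hk.1 hk.2 ((cellIndex_eq_iff hk.1 hk.2 hu).1 rfl)
    obtain ⟨hclo, hchi⟩ := cellCenter_mem_Icc n (cellIndex n u)
    exact abs_sub_le_of_le_of_le (hφ hlo) (hφ hhi) (hφ hclo) (hφ hchi)
  calc W1 (μ.map φ) (∑ k ∈ Finset.Icc 1 n, μ (Ikn n k) • Measure.dirac (φ (center k)))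
      = W1 (μ.map φ) (μ.map fun u => φ (center (cellIndex n u))) := by
        rw [map_comp_cellIndex hsupp hn fun k => φ (center k)]
    _ ≤ ∫ u, |φ u - φ (center (cellIndex n u))| ∂μ :=
        Wcost_map_le_integral (fun _ _ => abs_nonneg _) _ _
    _ ≤ ∫ u, increment (cellIndex n u) ∂μ :=
        integral_mono_of_nonneg (.of_forall fun _ => abs_nonneg _)
          (integrable_comp_cellIndex hsupp hn increment) hcell
    _ = _ := integral_comp_cellIndex hsupp hn increment

lemma sum_measureReal_Ikn {μ : Measure ℝ} [IsProbabilityMeasure μ]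
    (hsupp : μ (Set.Icc (0:ℝ) 1)ᶜ = 0) {n : ℕ} (hn : 1 ≤ n) :
    ∑ k ∈ Finset.Icc 1 n, μ.real (Ikn n k) = 1 := by
  simpa using (integral_comp_cellIndex hsupp hn fun _ => (1:ℝ)).symm

namespace IsBrownianFlow

variable {Ω : Type*} {m0 : MeasurableSpace Ω} {P : Measure Ω} [IsProbabilityMeasure P]
  {ℱ : Filtration ℝ≥0 m0} {x : ℝ → ℝ≥0 → Ω → ℝ}

lemma integral_eq (hx : IsBrownianFlow P ℱ x) (u : ℝ) (t : ℝ≥0) : ∫ ω, x u t ω ∂P = u := by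
  have h := (hx.mart u).setIntegral_eq (zero_le : 0 ≤ t) MeasurableSet.univ
  rw [setIntegral_univ, setIntegral_univ] at h
  rw [← h, integral_congr_ae (hx.init u), integral_const, probReal_univ, one_smul]

lemma integral_sum_increments (hx : IsBrownianFlow P ℱ x) (n : ℕ) (t : ℝ≥0) (s : Finset ℕ)
    (w : ℕ → ℝ) :
    ∫ ω, ∑ k ∈ s, w k * (x ((k:ℝ) / n) t ω - x (((k:ℝ) - 1) / n) t ω) ∂P =
      (∑ k ∈ s, w k) / n := by
  have hint : ∀ u, Integrable (x u t) P := fun u => (hx.mart u).integrable t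
  rw [integral_finsetSum s (f := fun k ω => w k * (x ((k:ℝ) / n) t ω - x (((k:ℝ) - 1) / n) t ω))
    fun k _ => ((hint _).sub (hint _)).const_mul (w k), Finset.sum_div]
  refine Finset.sum_congr rfl fun k _ => ?_
  rw [integral_const_mul, integral_sub (hint _) (hint _), hx.integral_eq, hx.integral_eq]
  ring

end IsBrownianFlow

lemma one_div_le_div_sqrt {K : ℝ} (hK : 1 ≤ K) {n : ℕ} (hn : 1 ≤ n) :
    1 / (n:ℝ) ≤ K / Real.sqrt n := by
  have hn' : (1:ℝ) ≤ n := by exact_mod_cast hn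
  have hsqrt : 0 < Real.sqrt n := Real.sqrt_pos.2 (by linarith)
  rw [div_le_div_iff₀ (by linarith) hsqrt]
  nlinarith [Real.sqrt_le_self_iff.2 (Or.inr hn')]

lemma one_le_flowConstant : 1 ≤ Real.sqrt (64 / (3 * Real.sqrt (2 * π)) + 1 / 4) := by
  have h2pi : Real.sqrt (2 * π) ≤ 3 :=
    Real.sqrt_le_iff.2 ⟨by norm_num, by nlinarith [Real.pi_le_four]⟩
  have hpos : 0 < Real.sqrt (2 * π) := Real.sqrt_pos.2 (by positivity)
  have h : 3 / 4 ≤ 64 / (3 * Real.sqrt (2 * π)) := by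
    rw [div_le_div_iff₀ (by norm_num) (by positivity)]
    nlinarith
  exact Real.one_le_sqrt.2 (by linarith)

theorem stmt6_general {Ω : Type*} {m0 : MeasurableSpace Ω} (P : Measure Ω) [IsProbabilityMeasure P]
    (ℱ : Filtration ℝ≥0 m0) (x : ℝ → ℝ≥0 → Ω → ℝ) (hx : IsBrownianFlow P ℱ x)
    (μ : Measure ℝ) [IsProbabilityMeasure μ] (hsupp : μ (Set.Icc (0:ℝ) 1)ᶜ = 0)
    (n : ℕ) (hn : 1 ≤ n)
    (lam lamn : Ω → Measure ℝ)
    (hlam : ∀ ω, lam ω = μ.map (fun u => x u 1 ω))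
    (hlamn : ∀ ω, lamn ω = ∑ k ∈ Finset.Icc 1 n,
        μ (Ikn n k) • Measure.dirac (x ((2 * (k:ℝ) - 1) / (2 * n)) 1 ω)) :
    (∫ ω, W1 (lam ω) (lamn ω) ∂P
        ≤ Real.sqrt (64 / (3 * Real.sqrt (2 * π)) + 1 / 4) / Real.sqrt n) ∧
    Wcost W1 (P.map lam) (P.map lamn)
        ≤ Real.sqrt (64 / (3 * Real.sqrt (2 * π)) + 1 / 4) / Real.sqrt n := by
  set increments : Ω → ℝ := fun ω => ∑ k ∈ Finset.Icc 1 n,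
    μ.real (Ikn n k) * (x ((k:ℝ) / n) 1 ω - x (((k:ℝ) - 1) / n) 1 ω)
  have hpointwise : ∀ᵐ ω ∂P, W1 (lam ω) (lamn ω) ≤ increments ω := by
    filter_upwards [hx.mono] with ω hmono
    rw [hlam, hlamn]
    exact W1_map_le_sum_increments hsupp hn fun u v huv => hmono u v huv 1
  have hintegrable : Integrable increments P :=
    integrable_finsetSum _ fun k _ =>
      (((hx.mart _).integrable 1).sub ((hx.mart _).integrable 1)).const_mul _
  have hmean : ∫ ω, increments ω ∂P = 1 / n := by
    rw [hx.integral_sum_increments, sum_measureReal_Ikn hsupp hn]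
  have hW1 : ∫ ω, W1 (lam ω) (lamn ω) ∂P
      ≤ Real.sqrt (64 / (3 * Real.sqrt (2 * π)) + 1 / 4) / Real.sqrt n :=
    calc ∫ ω, W1 (lam ω) (lamn ω) ∂P ≤ ∫ ω, increments ω ∂P :=
          integral_mono_of_nonneg (.of_forall fun _ => W1_nonneg _ _) hintegrable hpointwise
      _ = 1 / n := hmean
      _ ≤ _ := one_div_le_div_sqrt one_le_flowConstant hn
  exact ⟨hW1, (Wcost_map_le_integral (fun _ _ => W1_nonneg _ _) lam lamn).trans hW1⟩

/-- Theorem 2 of the paper: for a Brownian stochastic flow `x` and `μ` supported in `[0,1]`,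
with `λ = μ ∘ x⁻¹(·,1)` and `λⁿ` the image of the discretized measure
`μⁿ = Σ_k μ(I_k^n) δ_{(2k-1)/(2n)}`, one has `E[W₁(λ, λⁿ)] ≤ K/√n` and hence
`W₁(Λ, Λⁿ) ≤ K/√n` for the laws `Λ, Λⁿ`, where `K = √(64/(3√(2π)) + 1/4)`. -/
theorem stmt6 {Ω : Type*} {m0 : MeasurableSpace Ω} (P : Measure Ω) [IsProbabilityMeasure P]
    (ℱ : Filtration ℝ≥0 m0) (x : ℝ → ℝ≥0 → Ω → ℝ) (hx : IsBrownianFlow P ℱ x)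
    (μ : Measure ℝ) [IsProbabilityMeasure μ] (hsupp : μ (Set.Icc (0:ℝ) 1)ᶜ = 0)
    (n : ℕ) (hn : 1 ≤ n)
    (lam lamn : Ω → Measure ℝ)
    (hlam : ∀ ω, lam ω = μ.map (fun u => x u 1 ω))
    (hlamn : ∀ ω, lamn ω = ∑ k ∈ Finset.Icc 1 n,
        μ (Ikn n k) • Measure.dirac (x ((2 * (k:ℝ) - 1) / (2 * n)) 1 ω))
    (hlam_meas : Measurable lam) (hlamn_meas : Measurable lamn)
    (hW1meas : AEStronglyMeasurable (fun p : Measure ℝ × Measure ℝ => W1 p.1 p.2)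
      (P.map (fun ω => (lam ω, lamn ω)))) :
    (∫ ω, W1 (lam ω) (lamn ω) ∂P
        ≤ Real.sqrt (64 / (3 * Real.sqrt (2 * π)) + 1 / 4) / Real.sqrt n) ∧
    Wcost W1 (P.map lam) (P.map lamn)
        ≤ Real.sqrt (64 / (3 * Real.sqrt (2 * π)) + 1 / 4) / Real.sqrt n :=
  stmt6_general P ℱ x hx μ hsupp n hn lam lamn hlam hlamn

end
end
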